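/- Let G be a connected simple graph on 2^n vertices whose complement is also connected. Then G is an open XOR-magic graph of power n (i.e., admits a bijective labeling of its vertices by (Z_2)^n in which every open-neighborhood sum is the zero vector) if and only if the complement of G is a closed XOR-magic graph of power n (i.e., admits a bijective labeling by (Z_2)^n in which every closed-neighborhood sum is the zero vector). -/
import Mathlib

lemma total_sum_zero (n : ℕ) (hn : n ≠ 1) :
    ∑ x : Fin n → ZMod 2, x = 0 := by
  rcases Nat.eq_zero_or_pos n with h0 | hpos
  · subst h0; exact Subsingleton.elim _ _
  · have h2 : 2 ≤ n := by omega
    funext i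
    rw [Fintype.sum_apply]
    have : ∀ c : Fin n → ZMod 2, c i = ((Equiv.funSplitAt i (ZMod 2)) c).1 := fun c => rfl
    simp_rw [this]
    rw [(Equiv.funSplitAt i (ZMod 2)).sum_comp Prod.fst]
    rw [Fintype.sum_prod_type]
    simp only [Finset.sum_const, Finset.card_univ, smul_eq_mul]
    rw [← Finset.smul_sum]
    have hcard : Fintype.card ({ j // j ≠ i } → ZMod 2) = 2 ^ (n - 1) := by
      simp [Fintype.card_fun, Fintype.card_subtype_compl]
    have hsum : (∑ a : ZMod 2, a) = 1 := by decide
    rw [hsum, hcard]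
    have hd : (2 : ℕ) ∣ 2 ^ (n - 1) := dvd_pow_self 2 (by omega)
    have : ((2 ^ (n - 1) : ℕ) : ZMod 2) = 0 := (ZMod.natCast_eq_zero_iff _ _).2 hd
    rw [nsmul_eq_mul, this, zero_mul]
    rfl

lemma adj_of_card_two {V : Type*} [Fintype V] (G : SimpleGraph V) (h : G.Connected)
    (hc : Fintype.card V = 2) {v w : V} (hvw : v ≠ w) : G.Adj v w := by
  classical
  have huniv : ∀ x : V, x = v ∨ x = w := by
    intro x
    by_contra hx
    push_neg at hx
    have : 3 ≤ Fintype.card V := by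
      have : ({v, w, x} : Finset V).card = 3 := by
        rw [Finset.card_insert_of_notMem (by simp [hvw, Ne.symm hx.1]),
          Finset.card_insert_of_notMem (by simp [Ne.symm hx.2]), Finset.card_singleton]
      calc 3 = ({v, w, x} : Finset V).card := this.symm
        _ ≤ Fintype.card V := Finset.card_le_univ _
    omega
  obtain ⟨p⟩ := h.preconnected v w
  cases p with
  | nil => exact absurd rfl hvw
  | @cons _ b _ hadj q =>
    rcases huniv b with rfl | rfl
    · exact absurd rfl (G.ne_of_adj hadj)
    · exact hadj

theorem stmt_19 {V : Type*} [Fintype V] (n : ℕ) (hcard : Fintype.card V = 2 ^ n)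
    (G : SimpleGraph V) (hG : G.Connected) (hGc : Gᶜ.Connected) :
    (G.Connected ∧ ∃ ℓ : V ≃ (Fin n → ZMod 2),
        ∀ v, ∑ᶠ u ∈ G.neighborSet v, ℓ u = 0)
    ↔
    (Gᶜ.Connected ∧ ∃ ℓ : V ≃ (Fin n → ZMod 2),
        ∀ v, ∑ᶠ u ∈ insert v (Gᶜ.neighborSet v), ℓ u = 0) := by
  classical
  have hn : n ≠ 1 := by
    rintro rfl
    rw [pow_one] at hcard
    obtain ⟨v, w, hvw⟩ := Fintype.exists_pair_of_one_lt_card (hcard ▸ one_lt_two)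
    have h1 := adj_of_card_two G hG hcard hvw
    have h2 := adj_of_card_two Gᶜ hGc hcard hvw
    exact (G.compl_adj v w).1 h2 |>.2 h1
  have key : ∀ (ℓ : V ≃ (Fin n → ZMod 2)) (v : V),
      (∑ᶠ u ∈ G.neighborSet v, ℓ u) + (∑ᶠ u ∈ insert v (Gᶜ.neighborSet v), ℓ u) = 0 := by
    intro ℓ v
    have hset : insert v (Gᶜ.neighborSet v) = ((G.neighborSet v)ᶜ : Set V) := by
      ext u
      by_cases h : u = v
      · simp [h, G.irrefl]
      · simp [SimpleGraph.compl_adj, h, Ne.symm h]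
    rw [hset]
    have e1 : ∑ᶠ u ∈ G.neighborSet v, ℓ u = ∑ u ∈ (G.neighborSet v).toFinset, ℓ u := by
      rw [← finsum_mem_coe_finset, Set.coe_toFinset]
    have e2 : ∑ᶠ u ∈ ((G.neighborSet v)ᶜ : Set V), ℓ u
        = ∑ u ∈ ((G.neighborSet v)ᶜ : Set V).toFinset, ℓ u := by
      rw [← finsum_mem_coe_finset, Set.coe_toFinset]
    rw [e1, e2, Set.toFinset_compl, Finset.sum_add_sum_compl]
    exact (Fintype.sum_equiv ℓ (fun i => ℓ i) (fun x => x) (fun _ => rfl)).trans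
      (total_sum_zero n hn)
  constructor
  · rintro ⟨-, ℓ, hℓ⟩
    refine ⟨hGc, ℓ, fun v => ?_⟩
    have := key ℓ v
    rwa [hℓ v, zero_add] at this
  · rintro ⟨-, ℓ, hℓ⟩
    refine ⟨hG, ℓ, fun v => ?_⟩
    have := key ℓ v
    rwa [hℓ v, add_zero] at this
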